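/- Let $m_1, m_2 \ge 2$ be integers, $m = m_1 + m_2$, and $r_1, r_2 \in (0,1)$ with $r_1^2 + r_2^2 = 1$. Set $\lambda_1 = 2 r_2^2\left(\frac{m_1}{r_1^2} - \frac{m_2}{r_2^2}\right)$ and $\lambda_2 = 2 r_1^2\left(\frac{m_2}{r_2^2} - \frac{m_1}{r_1^2}\right)$. Then $\lambda_1 \le \frac{m_1 - 2\sqrt{m_1 - 1}}{r_1^2}$ and $\lambda_2 \le \frac{m_2 - 2\sqrt{m_2 - 1}}{r_2^2}$ if and only if $\frac{m_1 + 2\sqrt{m_1 - 1}}{2m} \le r_1^2 \le \frac{2m_1 + m_2 - 2\sqrt{m_2 - 1}}{2m}$ (equivalently, $\frac{m_2 + 2\sqrt{m_2 - 1}}{2m} \le r_2^2 \le \frac{m_1 + 2m_2 - 2\sqrt{m_1 - 1}}{2m}$). -/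

import Mathlib

/-! With `x = r₁²` and `y = r₂² = 1 - x`, clearing the positive denominators turns
`λ₁ ≤ (m₁ - 2√(m₁-1))/x` into `m₁ + 2√(m₁-1) ≤ 2(m₁+m₂)x` and, symmetrically,
`λ₂ ≤ (m₂ - 2√(m₂-1))/y` into `m₂ + 2√(m₂-1) ≤ 2(m₁+m₂)y`. Both are linear in `x`
(resp. in `y`), so dividing by `2(m₁+m₂)` gives the two-sided bounds. -/

lemma two_mul_mul_div_sub_div_le_sub_div_iff {x y m₁ m₂ a : ℝ} (hx : 0 < x) (hy : 0 < y)
    (hxy : x + y = 1) :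
    2 * y * (m₁ / x - m₂ / y) ≤ (m₁ - a) / x ↔ m₁ + a ≤ 2 * (m₁ + m₂) * x := by
  have hlhs : 2 * y * (m₁ / x - m₂ / y) * x = 2 * m₁ - 2 * (m₁ + m₂) * x := by
    field_simp
    linear_combination m₁ * hxy
  rw [le_div_iff₀ hx, hlhs]
  constructor <;> intro h <;> linarith

theorem radii_constraints_PMC (m1 m2 : ℕ) (hm1 : 2 ≤ m1)
    (r1 r2 : ℝ) (hr1 : r1 ∈ Set.Ioo (0 : ℝ) 1) (hr2 : r2 ∈ Set.Ioo (0 : ℝ) 1)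
    (hsum : r1 ^ 2 + r2 ^ 2 = 1)
    (l1 l2 : ℝ)
    (hl1 : l1 = 2 * r2 ^ 2 * ((m1 : ℝ) / r1 ^ 2 - (m2 : ℝ) / r2 ^ 2))
    (hl2 : l2 = 2 * r1 ^ 2 * ((m2 : ℝ) / r2 ^ 2 - (m1 : ℝ) / r1 ^ 2)) :
    ((l1 ≤ ((m1 : ℝ) - 2 * Real.sqrt ((m1 : ℝ) - 1)) / r1 ^ 2 ∧
        l2 ≤ ((m2 : ℝ) - 2 * Real.sqrt ((m2 : ℝ) - 1)) / r2 ^ 2) ↔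
      (((m1 : ℝ) + 2 * Real.sqrt ((m1 : ℝ) - 1)) / (2 * ((m1 : ℝ) + m2)) ≤ r1 ^ 2 ∧
        r1 ^ 2 ≤ (2 * (m1 : ℝ) + m2 - 2 * Real.sqrt ((m2 : ℝ) - 1)) /
          (2 * ((m1 : ℝ) + m2)))) ∧
    ((l1 ≤ ((m1 : ℝ) - 2 * Real.sqrt ((m1 : ℝ) - 1)) / r1 ^ 2 ∧
        l2 ≤ ((m2 : ℝ) - 2 * Real.sqrt ((m2 : ℝ) - 1)) / r2 ^ 2) ↔
      (((m2 : ℝ) + 2 * Real.sqrt ((m2 : ℝ) - 1)) / (2 * ((m1 : ℝ) + m2)) ≤ r2 ^ 2 ∧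
        r2 ^ 2 ≤ ((m1 : ℝ) + 2 * (m2 : ℝ) - 2 * Real.sqrt ((m1 : ℝ) - 1)) /
          (2 * ((m1 : ℝ) + m2)))) := by
  subst hl1 hl2
  have hx : 0 < r1 ^ 2 := pow_pos hr1.1 2
  have hy : 0 < r2 ^ 2 := pow_pos hr2.1 2
  have hM : (0 : ℝ) < 2 * ((m1 : ℝ) + m2) := by
    have : (2 : ℝ) ≤ m1 := by exact_mod_cast hm1
    positivity
  have hMsum : 2 * ((m1 : ℝ) + m2) * r1 ^ 2 + 2 * ((m1 : ℝ) + m2) * r2 ^ 2 =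
      2 * ((m1 : ℝ) + m2) := by
    linear_combination 2 * ((m1 : ℝ) + m2) * hsum
  rw [two_mul_mul_div_sub_div_le_sub_div_iff hx hy hsum,
    two_mul_mul_div_sub_div_le_sub_div_iff hy hx (by linarith),
    div_le_iff₀ hM, le_div_iff₀ hM, div_le_iff₀ hM, le_div_iff₀ hM]
  constructor <;> constructor <;> rintro ⟨h₁, h₂⟩ <;> constructor <;> linarith
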